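/- With aₙ = n⁴, ãₙ = 1, qₙ = n^{-8}, and ξₙ = n^{-7} for n ≥ 1: (i) the series Σₙ ((ãₙ - aₙ)²/(aₙ qₙ)) ξₙ² converges (its terms are bounded by 1/n²); (ii) the series with the roles reversed, Σₙ ((aₙ - ãₙ)²/(ãₙ qₙ)) ξₙ², has terms (n⁴-1)²·n⁸·n^{-14} ≥ constant · n², which tend to infinity, so it diverges. -/

import Mathlib

open Real

lemma bound_aux (n : ℕ) (hn : 1 ≤ n) :
    (((1 : ℝ) - (n : ℝ) ^ 4) ^ 2 / ((n : ℝ) ^ 4 * ((n : ℝ) ^ 8)⁻¹)) * (((n : ℝ) ^ 7)⁻¹) ^ 2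
      ≤ 1 / (n : ℝ) ^ 2 := by
  have hn1 : (1 : ℝ) ≤ (n : ℝ) := by exact_mod_cast hn
  have hn0 : (0 : ℝ) < (n : ℝ) := by linarith
  have key : ((1 : ℝ) - (n : ℝ) ^ 4) ^ 2 ≤ ((n : ℝ) ^ 4) ^ 2 := by
    have h1 : (1 : ℝ) ≤ (n : ℝ) ^ 4 := one_le_pow₀ hn1
    nlinarith
  have lhs_eq : (((1 : ℝ) - (n : ℝ) ^ 4) ^ 2 / ((n : ℝ) ^ 4 * ((n : ℝ) ^ 8)⁻¹)) * (((n : ℝ) ^ 7)⁻¹) ^ 2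
      = ((1 : ℝ) - (n : ℝ) ^ 4) ^ 2 / (n : ℝ) ^ 10 := by
    field_simp
  rw [lhs_eq]
  rw [div_le_div_iff₀ (by positivity) (by positivity)]
  nlinarith [key, pow_pos hn0 8, pow_pos hn0 2]

/-- One-sided failure counterexample: with `aₙ = n⁴`, `ãₙ = 1`, `qₙ = n⁻⁸`, `ξₙ = n⁻⁷`,
the Cameron–Martin series in the direction `A → Ã` converges (terms `≤ 1/n²`) while
in the reversed direction `Ã → A` the terms tend to infinity, so the series diverges. -/
theorem one_sided_CM_failure
    (a a' q ξ : ℕ → ℝ)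
    (ha : ∀ n, a n = (n : ℝ) ^ 4)
    (ha' : ∀ n, a' n = 1)
    (hq : ∀ n, q n = ((n : ℝ) ^ 8)⁻¹)
    (hξ : ∀ n, ξ n = ((n : ℝ) ^ 7)⁻¹) :
    (Summable (fun n : ℕ => ((a' n - a n) ^ 2 / (a n * q n)) * (ξ n) ^ 2)) ∧
    (∀ n : ℕ, 1 ≤ n → ((a' n - a n) ^ 2 / (a n * q n)) * (ξ n) ^ 2 ≤ 1 / (n : ℝ) ^ 2) ∧
    (∀ n : ℕ, 2 ≤ n → ((a n - a' n) ^ 2 / (a' n * q n)) * (ξ n) ^ 2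
        = ((n : ℝ) ^ 4 - 1) ^ 2 / (n : ℝ) ^ 6) ∧
    ¬ Summable (fun n : ℕ => ((a n - a' n) ^ 2 / (a' n * q n)) * (ξ n) ^ 2) := by
  have hbound : ∀ n : ℕ, 1 ≤ n →
      ((a' n - a n) ^ 2 / (a n * q n)) * (ξ n) ^ 2 ≤ 1 / (n : ℝ) ^ 2 := by
    intro n hn
    rw [ha, ha', hq, hξ]
    exact bound_aux n hn
  refine ⟨?_, hbound, ?_, ?_⟩
  · -- summability by comparison
    have h2 : Summable (fun n : ℕ => 1 / (n : ℝ) ^ 2) := by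
      simpa using Real.summable_one_div_nat_pow.mpr (by norm_num : 1 < 2)
    apply Summable.of_nonneg_of_le (fun n => ?_) (fun n => ?_) h2
    · rw [ha, ha', hq, hξ]
      positivity
    · rcases Nat.eq_zero_or_pos n with h0 | h1
      · subst h0
        simp [ha, ha', hq, hξ]
      · exact hbound n h1
  · -- exact value for n ≥ 2
    intro n hn
    have hn0 : (0 : ℝ) < (n : ℝ) := by
      exact_mod_cast Nat.lt_of_lt_of_le (by norm_num) hn
    rw [ha, ha', hq, hξ]
    field_simp
  · -- non-summability: terms ≥ 1 for n ≥ 2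
    intro hsum
    have htend := hsum.tendsto_atTop_zero
    have hev : ∀ᶠ n : ℕ in Filter.atTop,
        (1 : ℝ) ≤ ((a n - a' n) ^ 2 / (a' n * q n)) * (ξ n) ^ 2 := by
      filter_upwards [Filter.eventually_ge_atTop 2] with n hn
      have hn2 : (2 : ℝ) ≤ (n : ℝ) := by exact_mod_cast hn
      have hn0 : (0 : ℝ) < (n : ℝ) := by linarith
      rw [ha, ha', hq, hξ]
      have h3 : (n : ℝ) ^ 3 ≤ (n : ℝ) ^ 4 - 1 := by nlinarith [one_le_pow₀ (by linarith : (1:ℝ) ≤ (n:ℝ)) (n := 3), mul_le_mul_of_nonneg_left hn2 (le_of_lt (pow_pos hn0 3))]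
      have key : (n : ℝ) ^ 6 ≤ ((n : ℝ) ^ 4 - 1) ^ 2 := by nlinarith [pow_pos hn0 3]
      have lhs_eq : (((n : ℝ) ^ 4 - 1) ^ 2 / (1 * ((n : ℝ) ^ 8)⁻¹)) * (((n : ℝ) ^ 7)⁻¹) ^ 2
          = ((n : ℝ) ^ 4 - 1) ^ 2 / (n : ℝ) ^ 6 := by
        field_simp
      rw [lhs_eq, le_div_iff₀ (by positivity), one_mul]
      exact key
    have := htend.eventually (gt_mem_nhds (by norm_num : (0:ℝ) < 1))
    rcases (hev.and this).exists with ⟨n, h1, h2⟩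
    linarith
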